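/- Let p ≥ 5 be a prime with p ≡ 3 mod 4 and δ an integer not divisible by p. Then there is no x with 1 ≤ x ≤ (p-1)/2 such that p divides δ²x²+4, the number of such x with (δ²x²+4/p) = +1 is (p-3)/4, and the number with (δ²x²+4/p) = -1 is (p+1)/4. -/

import Mathlib

/-! Since `p ≡ 3 (mod 4)`, `-1` is not a square mod `p`, so `δ²x² + 4 = (δx)² + 2²` never
vanishes and every symbol is `±1`. For `b ≠ 0` the quadratic character `χ` of `𝔽_p` satisfies
`∑_z χ(z² + b) = -1`: counting square roots turns it into `∑_a χ(a) χ(a + b)`, a multiple of the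
Jacobi sum `J(χ, χ) = -χ(-1)`. The summand `χ(δ²y² + 4)` is even in `y` and equals `1` at `y = 0`,
so its sum over `1 ≤ x ≤ (p - 1)/2` is `-1`; together with the number `(p - 1)/2` of terms this
determines both counts. -/

open Finset

section

variable {F : Type*} [Field F] [Fintype F] [DecidableEq F]

theorem quadraticChar_sum_mul_add (hF : ringChar F ≠ 2) {b : F} (hb : b ≠ 0) :
    ∑ a : F, quadraticChar F a * quadraticChar F (a + b) = -1 := by
  set χ := quadraticChar F
  have hJ : jacobiSum χ χ = -χ (-1) := by
    simpa only [(quadraticChar_isQuadratic F).inv] using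
      jacobiSum_nontrivial_inv (quadraticChar_ne_one hF)
  have hb' : χ (-b) * χ b = χ (-1) := by
    rw [← map_mul, neg_mul, ← sq, neg_eq_neg_one_mul, map_mul, quadraticChar_sq_one' hb, mul_one]
  calc ∑ a : F, χ a * χ (a + b)
      = ∑ x : F, χ (-b * x) * χ (-b * x + b) :=
        (Fintype.sum_equiv (Equiv.mulLeft₀ (-b) (neg_ne_zero.mpr hb)) _ _ fun _ ↦ rfl).symm
    _ = χ (-1) * jacobiSum χ χ := by
        rw [jacobiSum, mul_sum, ← hb']
        refine sum_congr rfl fun x _ ↦ ?_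
        rw [show -b * x + b = b * (1 - x) by ring, map_mul, map_mul]
        ring
    _ = -1 := by rw [hJ, mul_neg, ← map_mul, neg_mul_neg, one_mul, map_one]

theorem quadraticChar_sum_sq_add (hF : ringChar F ≠ 2) {b : F} (hb : b ≠ 0) :
    ∑ z : F, quadraticChar F (z ^ 2 + b) = -1 := by
  set χ := quadraticChar F
  have hfiber (a : F) : ∑ z with z ^ 2 = a, χ (z ^ 2 + b) = (χ a + 1) * χ (a + b) := by
    rw [sum_congr rfl fun z hz ↦ by rw [(mem_filter.mp hz).2], sum_const, nsmul_eq_mul]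
    congr 1
    simpa only [Set.toFinset_ofPred] using quadraticChar_card_sqrts hF a
  calc ∑ z : F, χ (z ^ 2 + b)
      = ∑ a : F, (χ a * χ (a + b) + χ (a + b)) := by
        rw [← sum_fiberwise univ (· ^ 2)]
        exact sum_congr rfl fun a _ ↦ by rw [hfiber]; ring
    _ = -1 := by
        rw [sum_add_distrib, quadraticChar_sum_mul_add hF hb,
          Fintype.sum_equiv (Equiv.addRight b) (fun a ↦ χ (a + b)) χ fun _ ↦ rfl,
          quadraticChar_sum_zero hF, add_zero]

end

theorem ZMod.sum_eq_add_two_nsmul_sum_Icc {M : Type*} [AddCommMonoid M] {n : ℕ} [NeZero n]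
    (hn : Odd n) (f : ZMod n → M) (hf : ∀ x, f (-x) = f x) :
    ∑ x, f x = f 0 + 2 • ∑ k ∈ Icc 1 (n / 2), f k := by
  obtain ⟨m, rfl⟩ := hn
  have hm : (2 * m + 1) / 2 = m := by omega
  have hrange : ∑ x : ZMod (2 * m + 1), f x = ∑ k ∈ range (2 * m + 1), f k :=
    sum_nbij' ZMod.val (↑) (fun x _ ↦ by simpa using ZMod.val_lt x) (by simp) (by simp) (by simp)
      (by simp)
  have hreflect : ∑ k ∈ Ico (m + 1) (2 * m + 1), f k = ∑ k ∈ Ico 1 (m + 1), f k := by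
    have := sum_Ico_reflect (fun k : ℕ ↦ f k) 1 (show m + 1 ≤ 2 * m + 1 + 1 by omega)
    rw [show 2 * m + 1 + 1 - (m + 1) = m + 1 by omega, Nat.add_sub_cancel] at this
    rw [← this]
    refine sum_congr rfl fun k hk ↦ ?_
    rw [Nat.cast_sub (by simp at hk; omega), ZMod.natCast_self, zero_sub, hf]
  rw [hrange, hm, two_nsmul, range_eq_Ico, sum_eq_sum_Ico_succ_bot (by omega),
    ← sum_Ico_consecutive _ (show 1 ≤ m + 1 by omega) (show m + 1 ≤ 2 * m + 1 by omega), hreflect,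
    Ico_add_one_right_eq_Icc, Nat.cast_zero]

theorem quadraticChar_sum_Icc_sq_add_sq {p : ℕ} [Fact p.Prime] (hp : p ≠ 2) {c a : ZMod p}
    (hc : c ≠ 0) (ha : a ≠ 0) :
    ∑ x ∈ Icc 1 (p / 2), quadraticChar (ZMod p) ((c * x) ^ 2 + a ^ 2) = -1 := by
  set χ := quadraticChar (ZMod p)
  have hhalf := ZMod.sum_eq_add_two_nsmul_sum_Icc ((Fact.out : p.Prime).odd_of_ne_two hp)
    (fun y ↦ χ ((c * y) ^ 2 + a ^ 2)) fun y ↦ by ring_nf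
  rw [Fintype.sum_equiv (Equiv.mulLeft₀ c hc) (fun y ↦ χ ((c * y) ^ 2 + a ^ 2))
      (fun z ↦ χ (z ^ 2 + a ^ 2)) fun _ ↦ rfl,
    quadraticChar_sum_sq_add ((ZMod.ringChar_zmod_n p).trans_ne hp) (pow_ne_zero 2 ha), mul_zero,
    zero_pow two_ne_zero, zero_add, quadraticChar_sq_one' ha, two_nsmul] at hhalf
  linarith

section SignCount

variable {ι : Type*} (s : Finset ι) {g : ι → ℤ}

theorem Finset.filter_eq_neg_one_eq_filter_ne_one (hg : ∀ x ∈ s, g x = 1 ∨ g x = -1) :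
    {x ∈ s | g x = -1} = {x ∈ s | g x ≠ 1} :=
  filter_congr fun x hx ↦ by rcases hg x hx with h | h <;> simp [h]

theorem Finset.card_filter_eq_one_add_card_filter_eq_neg_one
    (hg : ∀ x ∈ s, g x = 1 ∨ g x = -1) :
    #{x ∈ s | g x = 1} + #{x ∈ s | g x = -1} = #s := by
  rw [filter_eq_neg_one_eq_filter_ne_one s hg, card_filter_add_card_filter_not]

theorem Finset.sum_eq_card_filter_eq_one_sub_card_filter_eq_neg_one
    (hg : ∀ x ∈ s, g x = 1 ∨ g x = -1) :
    ∑ x ∈ s, g x = #{x ∈ s | g x = 1} - #{x ∈ s | g x = -1} := by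
  rw [← sum_filter_add_sum_filter_not s (g · = 1), ← filter_eq_neg_one_eq_filter_ne_one s hg,
    sum_congr rfl fun x hx ↦ (mem_filter.mp hx).2, sum_congr rfl fun x hx ↦ (mem_filter.mp hx).2]
  simp [sub_eq_add_neg]

end SignCount

open Finset in
theorem stmt_6_general (p : ℕ) (hp : p.Prime) (hp3 : p % 4 = 3)
    (δ : ℤ) (hδ : ¬ (p : ℤ) ∣ δ) :
    (¬ ∃ x : ℕ, 1 ≤ x ∧ x ≤ (p - 1) / 2 ∧ (p : ℤ) ∣ δ ^ 2 * (x : ℤ) ^ 2 + 4) ∧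
    ((Finset.Icc 1 ((p - 1) / 2)).filter
        fun x : ℕ => @legendreSym p ⟨hp⟩ (δ ^ 2 * (x : ℤ) ^ 2 + 4) = 1).card = (p - 3) / 4 ∧
    ((Finset.Icc 1 ((p - 1) / 2)).filter
        fun x : ℕ => @legendreSym p ⟨hp⟩ (δ ^ 2 * (x : ℤ) ^ 2 + 4) = -1).card = (p + 1) / 4 := by
  have := Fact.mk hp
  have h2 : (2 : ZMod p) ≠ 0 := Ring.two_ne_zero (by rw [ZMod.ringChar_zmod_n]; omega)
  have hδ' : (δ : ZMod p) ≠ 0 := (ZMod.intCast_zmod_eq_zero_iff_dvd δ p).not.mpr hδ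
  have hcast (x : ℕ) : ((δ ^ 2 * x ^ 2 + 4 : ℤ) : ZMod p) = (δ * x) ^ 2 + 2 ^ 2 := by
    push_cast; ring
  have hne (x : ℕ) : ((δ ^ 2 * x ^ 2 + 4 : ℤ) : ZMod p) ≠ 0 := fun h ↦
    ZMod.mod_four_ne_three_of_sq_eq_neg_sq' (x := (δ * x : ZMod p)) h2
      (by rw [hcast] at h; linear_combination h) hp3
  have hsign (x : ℕ) (_ : x ∈ Icc 1 ((p - 1) / 2)) :
      legendreSym p (δ ^ 2 * x ^ 2 + 4) = 1 ∨ legendreSym p (δ ^ 2 * x ^ 2 + 4) = -1 :=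
    quadraticChar_dichotomy (hne x)
  have hsum : ∑ x ∈ Icc 1 ((p - 1) / 2), legendreSym p (δ ^ 2 * x ^ 2 + 4) = -1 := by
    simp only [legendreSym, hcast, show (p - 1) / 2 = p / 2 by omega]
    exact quadraticChar_sum_Icc_sq_add_sq (by omega) hδ' h2
  refine ⟨fun ⟨x, _, _, hx⟩ ↦ hne x ((ZMod.intCast_zmod_eq_zero_iff_dvd _ p).mpr hx), ?_⟩
  have hcard := card_filter_eq_one_add_card_filter_eq_neg_one _ hsign
  have hdiff := sum_eq_card_filter_eq_one_sub_card_filter_eq_neg_one _ hsign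
  rw [hsum] at hdiff
  rw [Nat.card_Icc] at hcard
  omega

open Finset in
theorem stmt_6 (p : ℕ) (hp : p.Prime) (hp5 : 5 ≤ p) (hp3 : p % 4 = 3)
    (δ : ℤ) (hδ : ¬ (p : ℤ) ∣ δ) :
    (¬ ∃ x : ℕ, 1 ≤ x ∧ x ≤ (p - 1) / 2 ∧ (p : ℤ) ∣ δ ^ 2 * (x : ℤ) ^ 2 + 4) ∧
    ((Finset.Icc 1 ((p - 1) / 2)).filter
        fun x : ℕ => @legendreSym p ⟨hp⟩ (δ ^ 2 * (x : ℤ) ^ 2 + 4) = 1).card = (p - 3) / 4 ∧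
    ((Finset.Icc 1 ((p - 1) / 2)).filter
        fun x : ℕ => @legendreSym p ⟨hp⟩ (δ ^ 2 * (x : ℤ) ^ 2 + 4) = -1).card = (p + 1) / 4 :=
  stmt_6_general p hp hp3 δ hδ
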